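/- arXiv:2107.05951 — 4 statements merged into one kernel-verified Lean document; each statement's English description precedes it below -/
import Mathlib

section
/- Let f : ℝⁿ → ℝ be convex and differentiable with ‖∇f(x)‖₂ ≤ G for all x ∈ ℝⁿ, let r > 0, and let ‖·‖_* be a norm on ℝⁿ and p > 0 a constant such that (E_e[‖e‖_*⁴])^{1/2} ≤ p². Assume the smoothed function F(x) = E_e[f(x + r e)] is differentiable with ∇F(x) = (n/r) E_e[f(x + r e) e]. Then for every x ∈ ℝⁿ, ‖∇F(x)‖_* ≤ 2 √n p G. -/
/-!
The smoothed function `F` is an average of translates of `f`, so it is `G`-Lipschitz like `f`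
and `‖∇F(x)‖₂ ≤ G`. It remains to compare `‖·‖_*` with `√n ‖·‖₂`. By Hahn–Banach, `‖v‖_*` is
attained as `⟪w, v⟫` by a vector `w` with `|⟪w, z⟫| ≤ ‖z‖_*` for all `z`. Rotation invariance
of the uniform measure gives `E_e ⟪w, e⟫² = ‖w‖² / n`, hence
`‖w‖² = n E_e ⟪w, e⟫² ≤ n (E_e ⟪w, e⟫⁴)^{1/2} ≤ n (E_e ‖e‖_*⁴)^{1/2} ≤ n p²`,
and `‖v‖_* ≤ ‖w‖ ‖v‖₂ ≤ √n p G`, which is even better than claimed by a factor of `2`.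
-/

open MeasureTheory Metric Set

/-- The uniform probability distribution of a random vector `e` on the unit Euclidean
sphere `S^{n-1}`: the normalized restriction of the `(n-1)`-dimensional Hausdorff
measure to the sphere. -/
noncomputable def sphereUniform (n : ℕ) : Measure (EuclideanSpace ℝ (Fin n)) :=
  (μH[(n : ℝ) - 1] (sphere (0 : EuclideanSpace ℝ (Fin n)) 1))⁻¹ •
    (μH[(n : ℝ) - 1]).restrict (sphere (0 : EuclideanSpace ℝ (Fin n)) 1)

open InnerProductSpace Module ProbabilityTheory
open scoped RealInnerProductSpace

section Gradient

variable {E : Type*} [NormedAddCommGroup E] [InnerProductSpace ℝ E] [CompleteSpace E]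

theorem norm_gradient_eq_norm_fderiv (f : E → ℝ) (x : E) : ‖gradient f x‖ = ‖fderiv ℝ f x‖ := by
  rw [← toDual_gradient, LinearIsometryEquiv.norm_map]

theorem norm_sub_le_of_norm_gradient_le {f : E → ℝ} {G : ℝ} (hf : Differentiable ℝ f)
    (hG : ∀ x, ‖gradient f x‖ ≤ G) (a b : E) : ‖f a - f b‖ ≤ G * ‖a - b‖ :=
  convex_univ.norm_image_sub_le_of_norm_fderiv_le (fun z _ => hf z)
    (fun z _ => norm_gradient_eq_norm_fderiv f z ▸ hG z) (mem_univ b) (mem_univ a)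

theorem norm_gradient_le_of_norm_sub_le {F : E → ℝ} {G : ℝ} (hG : 0 ≤ G)
    (hF : ∀ a b, ‖F a - F b‖ ≤ G * ‖a - b‖) (x : E) : ‖gradient F x‖ ≤ G := by
  rw [norm_gradient_eq_norm_fderiv]
  exact norm_fderiv_le_of_lip' ℝ hG (Filter.Eventually.of_forall fun y => hF y x)

end Gradient

theorem Continuous.memLp_of_ae_mem_compact {X : Type*} [TopologicalSpace X] [MeasurableSpace X]
    [OpensMeasurableSpace X] {μ : Measure X} [IsFiniteMeasure μ] {K : Set X} (hK : IsCompact K)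
    (hμ : ∀ᵐ x ∂μ, x ∈ K) {g : X → ℝ} (hg : Continuous g) (p : ENNReal) : MemLp g p μ := by
  obtain ⟨C, hC⟩ := hK.exists_bound_of_continuousOn hg.continuousOn
  exact MemLp.of_bound hg.aestronglyMeasurable C (hμ.mono hC)

theorem sq_integral_le_integral_sq {Ω : Type*} [MeasurableSpace Ω] {μ : Measure Ω}
    [IsProbabilityMeasure μ] {X : Ω → ℝ} (hX : MemLp X 2 μ) :
    (∫ ω, X ω ∂μ) ^ 2 ≤ ∫ ω, X ω ^ 2 ∂μ := by
  have := variance_nonneg X μ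
  rw [variance_eq_sub hX] at this
  simpa [sub_nonneg] using this

theorem Seminorm.exists_inner_eq_and_abs_inner_le {E : Type*} [NormedAddCommGroup E]
    [InnerProductSpace ℝ E] [FiniteDimensional ℝ E] (q : Seminorm ℝ E) (v : E) :
    ∃ w : E, ⟪w, v⟫ = q v ∧ ∀ z, |⟪w, z⟫| ≤ q z := by
  have hker (t : ℝ) (ht : t • v = 0) : t • q v = 0 := by
    rcases smul_eq_zero.mp ht with rfl | rfl <;> simp
  let f := LinearPMap.mkSpanSingleton' (σ := RingHom.id ℝ) v (q v) hker
  have hf : ∀ x : f.domain, f x ≤ q x := by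
    rintro ⟨x, hx⟩
    obtain ⟨t, rfl⟩ := Submodule.mem_span_singleton.mp hx
    rw [LinearPMap.mkSpanSingleton'_apply, map_smul_eq_mul, smul_eq_mul, Real.norm_eq_abs]
    exact mul_le_mul_of_nonneg_right (le_abs_self t) (apply_nonneg q v)
  obtain ⟨g, hgf, hgq⟩ := Module.Dual.exists_extension_of_le_seminorm_real f.domain f.toFun hf
  refine ⟨(toDual ℝ E).symm (LinearMap.toContinuousLinearMap g), ?_, fun z => ?_⟩
  · rw [toDual_symm_apply]
    exact (hgf ⟨v, Submodule.mem_span_singleton_self v⟩).trans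
      (LinearPMap.mkSpanSingleton'_apply_self (σ := RingHom.id ℝ) v (q v) hker _)
  · rw [toDual_symm_apply]
    exact hgq z

section SphereMoments

variable {E : Type*} [NormedAddCommGroup E] [InnerProductSpace ℝ E] [MeasurableSpace E]
  [BorelSpace E] {μ : Measure E}

theorem integral_inner_sq_eq_of_norm_eq (hμ : ∀ Q : E ≃ₗᵢ[ℝ] E, μ.map Q = μ) {u v : E}
    (huv : ‖u‖ = ‖v‖) : ∫ e, ⟪u, e⟫ ^ 2 ∂μ = ∫ e, ⟪v, e⟫ ^ 2 ∂μ := by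
  set Q := Submodule.reflection (ℝ ∙ (u - v))ᗮ
  have hQu : Q u = v := Submodule.reflection_sub huv
  have hQ : MeasurePreserving Q μ μ := ⟨Q.continuous.measurable, hμ Q⟩
  calc ∫ e, ⟪u, e⟫ ^ 2 ∂μ = ∫ e, ⟪v, Q e⟫ ^ 2 ∂μ := by
        simp only [← hQu, LinearIsometryEquiv.inner_map_map]
    _ = ∫ e, ⟪v, e⟫ ^ 2 ∂μ :=
        hQ.integral_comp Q.toHomeomorph.measurableEmbedding fun e => ⟪v, e⟫ ^ 2

variable [FiniteDimensional ℝ E] [IsProbabilityMeasure μ]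

theorem finrank_mul_integral_inner_sq (hμ : ∀ Q : E ≃ₗᵢ[ℝ] E, μ.map Q = μ)
    (hsph : ∀ᵐ e ∂μ, e ∈ sphere (0 : E) 1) (w : E) :
    finrank ℝ E * ∫ e, ⟪w, e⟫ ^ 2 ∂μ = ‖w‖ ^ 2 := by
  let b := stdOrthonormalBasis ℝ E
  have hb : ∀ i, ∫ e, ⟪‖w‖ • b i, e⟫ ^ 2 ∂μ = ∫ e, ⟪w, e⟫ ^ 2 ∂μ := fun i =>
    integral_inner_sq_eq_of_norm_eq hμ (by simp [norm_smul, b.orthonormal.1 i])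
  have hint : ∀ i, Integrable (fun e => ⟪‖w‖ • b i, e⟫ ^ 2) μ := fun i =>
    ((by fun_prop : Continuous fun e => ⟪‖w‖ • b i, e⟫ ^ 2).memLp_of_ae_mem_compact
      (isCompact_sphere 0 1) hsph 1).integrable le_rfl
  calc finrank ℝ E * ∫ e, ⟪w, e⟫ ^ 2 ∂μ = ∑ i, ∫ e, ⟪‖w‖ • b i, e⟫ ^ 2 ∂μ := by
        simp only [hb, Finset.sum_const, Finset.card_univ, Fintype.card_fin, nsmul_eq_mul]
    _ = ∫ e, ∑ i, ⟪‖w‖ • b i, e⟫ ^ 2 ∂μ := (integral_finsetSum _ fun i _ => hint i).symm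
    _ = ∫ _, ‖w‖ ^ 2 ∂μ := integral_congr_ae <| hsph.mono fun e he => by
        simp [real_inner_smul_left, mul_pow, ← Finset.mul_sum, b.sum_sq_inner_right,
          mem_sphere_zero_iff_norm.mp he]
    _ = ‖w‖ ^ 2 := by simp

theorem norm_sq_le_finrank_mul_sqrt_integral_pow_four (hμ : ∀ Q : E ≃ₗᵢ[ℝ] E, μ.map Q = μ)
    (hsph : ∀ᵐ e ∂μ, e ∈ sphere (0 : E) 1) {q : E → ℝ} (hq : Continuous q) {w : E}
    (hw : ∀ z, |⟪w, z⟫| ≤ q z) : ‖w‖ ^ 2 ≤ finrank ℝ E * √(∫ e, q e ^ 4 ∂μ) := by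
  have hmemLp {g : E → ℝ} (hg : Continuous g) : MemLp g 2 μ :=
    hg.memLp_of_ae_mem_compact (isCompact_sphere 0 1) hsph 2
  have hw4 : ∀ e, (⟪w, e⟫ ^ 2) ^ 2 ≤ q e ^ 4 := fun e => by
    rw [← pow_mul, ← (show Even (2 * 2) by decide).pow_abs]
    exact pow_le_pow_left₀ (abs_nonneg _) (hw e) 4
  rw [← finrank_mul_integral_inner_sq hμ hsph w]
  gcongr
  calc ∫ e, ⟪w, e⟫ ^ 2 ∂μ ≤ √(∫ e, (⟪w, e⟫ ^ 2) ^ 2 ∂μ) :=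
        Real.le_sqrt_of_sq_le (sq_integral_le_integral_sq (hmemLp (by fun_prop)))
    _ ≤ √(∫ e, q e ^ 4 ∂μ) := Real.sqrt_le_sqrt <| integral_mono
        ((hmemLp (by fun_prop)).integrable one_le_two)
        ((hmemLp (hq.pow 4)).integrable one_le_two) hw4

theorem Seminorm.le_sqrt_finrank_mul_norm (hμ : ∀ Q : E ≃ₗᵢ[ℝ] E, μ.map Q = μ)
    (hsph : ∀ᵐ e ∂μ, e ∈ sphere (0 : E) 1) (q : Seminorm ℝ E) {p : ℝ} (hp : 0 ≤ p)
    (hmom : √(∫ e, q e ^ 4 ∂μ) ≤ p ^ 2) (v : E) : q v ≤ √(finrank ℝ E) * p * ‖v‖ := by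
  obtain ⟨w, hwv, hw⟩ := q.exists_inner_eq_and_abs_inner_le v
  have hq : Continuous q := q.convexOn.locallyLipschitz.continuous
  have hwp : ‖w‖ ≤ √(finrank ℝ E) * p := by
    rw [← Real.sqrt_sq hp, ← Real.sqrt_mul (Nat.cast_nonneg _)]
    refine Real.le_sqrt_of_sq_le ?_
    calc ‖w‖ ^ 2 ≤ finrank ℝ E * √(∫ e, q e ^ 4 ∂μ) :=
          norm_sq_le_finrank_mul_sqrt_integral_pow_four hμ hsph hq hw
      _ ≤ finrank ℝ E * p ^ 2 := by gcongr
  calc q v = ⟪w, v⟫ := hwv.symm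
    _ ≤ ‖w‖ * ‖v‖ := real_inner_le_norm w v
    _ ≤ √(finrank ℝ E) * p * ‖v‖ := by gcongr

end SphereMoments

section SphereUniform

variable {n : ℕ}

theorem sphereUniform_map_linearIsometryEquiv
    (Q : EuclideanSpace ℝ (Fin n) ≃ₗᵢ[ℝ] EuclideanSpace ℝ (Fin n)) :
    (sphereUniform n).map Q = sphereUniform n := by
  have hS : MeasurableSet (sphere (0 : EuclideanSpace ℝ (Fin n)) 1) :=
    isClosed_sphere.measurableSet
  have hpre : Q ⁻¹' sphere 0 1 = sphere 0 1 := by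
    ext z
    simp
  have hH : (μH[(n : ℝ) - 1]).map Q = μH[(n : ℝ) - 1] := by
    simpa using Q.toIsometryEquiv.map_hausdorffMeasure ((n : ℝ) - 1)
  have hres : ((μH[(n : ℝ) - 1]).restrict (sphere 0 1)).map Q =
      (μH[(n : ℝ) - 1]).restrict (sphere (0 : EuclideanSpace ℝ (Fin n)) 1) := by
    conv_lhs => rw [← hpre]
    rw [← Measure.restrict_map Q.continuous.measurable hS, hH]
  rw [sphereUniform, Measure.map_smul, hres]

theorem ae_mem_sphere_sphereUniform (n : ℕ) :
    ∀ᵐ e ∂(sphereUniform n), e ∈ sphere (0 : EuclideanSpace ℝ (Fin n)) 1 :=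
  Measure.ae_smul_measure (ae_restrict_mem isClosed_sphere.measurableSet) _

-- The normalizing factor `c⁻¹` turns `c = 0` and `c = ∞` alike into the zero measure, so the
-- Hausdorff measure of the sphere never has to be computed.
theorem sphereUniform_eq_zero_or_isProbabilityMeasure (n : ℕ) :
    sphereUniform n = 0 ∨ IsProbabilityMeasure (sphereUniform n) := by
  rcases eq_or_ne (μH[(n : ℝ) - 1] (sphere (0 : EuclideanSpace ℝ (Fin n)) 1)) 0 with h0 | h0
  · left
    rw [sphereUniform, Measure.restrict_eq_zero.mpr h0, smul_zero]
  rcases eq_or_ne (μH[(n : ℝ) - 1] (sphere (0 : EuclideanSpace ℝ (Fin n)) 1)) ⊤ with htop | htop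
  · left
    rw [sphereUniform, htop, ENNReal.inv_top, zero_smul]
  · right
    constructor
    rw [sphereUniform, Measure.smul_apply, Measure.restrict_apply_univ, smul_eq_mul,
      ENNReal.inv_mul_cancel h0 htop]

end SphereUniform

theorem norm_gradient_integral_comp_add_smul_le {E : Type*} [NormedAddCommGroup E]
    [InnerProductSpace ℝ E] [FiniteDimensional ℝ E] [MeasurableSpace E] [BorelSpace E]
    {μ : Measure E} [IsProbabilityMeasure μ] (hsph : ∀ᵐ e ∂μ, e ∈ sphere (0 : E) 1)
    {f : E → ℝ} (hf : Differentiable ℝ f) {G : ℝ} (hG : ∀ x, ‖gradient f x‖ ≤ G) (r : ℝ)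
    (x : E) : ‖gradient (fun x => ∫ e, f (x + r • e) ∂μ) x‖ ≤ G := by
  have hint (a : E) : Integrable (fun e => f (a + r • e)) μ :=
    ((hf.continuous.comp (by fun_prop)).memLp_of_ae_mem_compact (isCompact_sphere 0 1)
      hsph 1).integrable le_rfl
  refine norm_gradient_le_of_norm_sub_le ((norm_nonneg _).trans (hG x)) (fun a b => ?_) x
  rw [← integral_sub (hint a) (hint b)]
  calc ‖∫ e, (f (a + r • e) - f (b + r • e)) ∂μ‖ ≤ ∫ _, G * ‖a - b‖ ∂μ :=
        norm_integral_le_of_norm_le (integrable_const _) (ae_of_all _ fun e => by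
          simpa using norm_sub_le_of_norm_gradient_le hf hG (a + r • e) (b + r • e))
    _ = G * ‖a - b‖ := by simp

theorem smoothed_gradient_dual_norm_bound_general {n : ℕ}
    (f : EuclideanSpace ℝ (Fin n) → ℝ)
    (hf_diff : Differentiable ℝ f)
    (G : ℝ) (hG : ∀ x, ‖gradient f x‖ ≤ G)
    (r : ℝ)
    -- `dstar` is a norm `‖·‖_*` on `ℝⁿ`
    (dstar : EuclideanSpace ℝ (Fin n) → ℝ)
    (hd_add : ∀ x y, dstar (x + y) ≤ dstar x + dstar y)
    (hd_smul : ∀ (c : ℝ) x, dstar (c • x) = |c| * dstar x)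
    (p : ℝ) (hp : 0 < p)
    (hmom : Real.sqrt (∫ e, (dstar e) ^ 4 ∂(sphereUniform n)) ≤ p ^ 2) :
    ∀ x, dstar (gradient (fun x => ∫ e, f (x + r • e) ∂(sphereUniform n)) x) ≤
      2 * Real.sqrt n * p * G := by
  intro x
  let q : Seminorm ℝ (EuclideanSpace ℝ (Fin n)) := Seminorm.of dstar hd_add hd_smul
  have hG0 : 0 ≤ G := (norm_nonneg _).trans (hG 0)
  rcases sphereUniform_eq_zero_or_isProbabilityMeasure n with hμ | hμ
  · have hd0 : dstar 0 = 0 := map_zero q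
    simp only [hμ, integral_zero_measure, gradient_fun_const, hd0]
    positivity
  have hsph := ae_mem_sphere_sphereUniform n
  calc dstar (gradient _ x) = q (gradient _ x) := rfl
    _ ≤ √n * p * ‖gradient _ x‖ := by
        simpa using q.le_sqrt_finrank_mul_norm sphereUniform_map_linearIsometryEquiv hsph hp.le
          hmom _
    _ ≤ √n * p * G := by
        gcongr
        exact norm_gradient_integral_comp_add_smul_le hsph hf_diff hG r x
    _ ≤ 2 * √n * p * G := by
        have : 0 ≤ √n * p * G := by positivity
        linarith

/-- if `f` is convex and differentiable with `‖∇f(x)‖₂ ≤ G`, `r > 0`,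
`‖·‖_*` is a norm on `ℝⁿ` with `(𝔼_e ‖e‖_*⁴)^{1/2} ≤ p²` for a constant `p > 0`, and
the smoothed function `F x = 𝔼_e [f (x + r e)]` is differentiable with
`∇F(x) = (n/r) 𝔼_e [f (x + r e) e]`, then `‖∇F(x)‖_* ≤ 2 √n p G` for every `x`. -/
theorem smoothed_gradient_dual_norm_bound {n : ℕ} (hn : 1 ≤ n)
    (f : EuclideanSpace ℝ (Fin n) → ℝ)
    (hf_conv : ConvexOn ℝ Set.univ f) (hf_diff : Differentiable ℝ f)
    (G : ℝ) (hG : ∀ x, ‖gradient f x‖ ≤ G)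
    (r : ℝ) (hr : 0 < r)
    -- `dstar` is a norm `‖·‖_*` on `ℝⁿ`
    (dstar : EuclideanSpace ℝ (Fin n) → ℝ)
    (hd_add : ∀ x y, dstar (x + y) ≤ dstar x + dstar y)
    (hd_smul : ∀ (c : ℝ) x, dstar (c • x) = |c| * dstar x)
    (hd_def : ∀ x, dstar x = 0 → x = 0)
    (p : ℝ) (hp : 0 < p)
    (hmom : Real.sqrt (∫ e, (dstar e) ^ 4 ∂(sphereUniform n)) ≤ p ^ 2)
    (hF_diff : Differentiable ℝ (fun x => ∫ e, f (x + r • e) ∂(sphereUniform n)))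
    (hF_grad : ∀ x, gradient (fun x => ∫ e, f (x + r • e) ∂(sphereUniform n)) x =
        ((n : ℝ) / r) • ∫ e, f (x + r • e) • e ∂(sphereUniform n)) :
    ∀ x, dstar (gradient (fun x => ∫ e, f (x + r • e) ∂(sphereUniform n)) x) ≤
      2 * Real.sqrt n * p * G :=
  smoothed_gradient_dual_norm_bound_general f hf_diff G hG r dstar hd_add hd_smul p hp hmom
end

section
/- Let (p_t)_{t ≥ 1} be positive reals, define P_0 = 1 and P_t = p_t (1 + p_t)^{−1} P_{t−1} for t ≥ 1 (so 0 < P_t < 1 for t ≥ 1), and set θ_t = (P_{t−1} − P_t) / ((1 − P_t) P_{t−1}). Let (u_t)_{t ≥ 1} be arbitrary vectors in ℝⁿ and define ũ_0 = u_0 ∈ ℝⁿ and ũ_t = (1 − θ_t) ũ_{t−1} + θ_t u_t for t ≥ 1. Then for every t ≥ 1: ũ_t = Σ_{i=1}^{t} [P_t / ((1 − P_t) P_i (1 + p_i))] · u_i. -/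
/-!
Multiplying the recursion by `w_t = 1/P_t - 1` turns it into the telescoping identity
`w_t ũ_t = w_{t-1} ũ_{t-1} + (w_t - w_{t-1}) u_t`, because `w_t θ_t = 1/P_t - 1/P_{t-1} = w_t - w_{t-1}`.
Since `w_0 = 0`, summing gives `w_t ũ_t = Σ_{i ≤ t} (1/P_i - 1/P_{i-1}) u_i`, and the recursion for `P`
identifies `1/P_i - 1/P_{i-1}` with `1/(P_i (1 + p_i))`.
-/

open Finset

theorem smul_eq_smul_add_sum_of_affine_rec {R E : Type*} [Ring R] [AddCommGroup E] [Module R E]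
    (w θ : ℕ → R) (x u : ℕ → E) (hw : ∀ t ≥ 1, w t * θ t = w t - w (t - 1))
    (hx : ∀ t ≥ 1, x t = (1 - θ t) • x (t - 1) + θ t • u t) (t : ℕ) :
    w t • x t = w 0 • x 0 + ∑ i ∈ Icc 1 t, (w i - w (i - 1)) • u i := by
  induction t with
  | zero => simp
  | succ t ih =>
    have hw' : w (t + 1) * (1 - θ (t + 1)) = w t := by
      rw [mul_sub, mul_one, hw (t + 1) t.succ_pos, Nat.add_sub_cancel, sub_sub_cancel]
    rw [sum_Icc_succ_top (Nat.le_add_left 1 t), ← add_assoc, ← ih, hx (t + 1) t.succ_pos,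
      Nat.add_sub_cancel, smul_add, smul_smul, smul_smul, hw', hw (t + 1) t.succ_pos,
      Nat.add_sub_cancel]

theorem inv_sub_one_eq_one_sub_div {K : Type*} [Field K] {P : K} (hP : P ≠ 0) :
    P⁻¹ - 1 = (1 - P) / P := by
  rw [sub_div, div_self hP, one_div]

theorem inv_sub_one_mul_sub_div_eq_sub {K : Type*} [Field K] {P P' : K} (hP : P ≠ 0)
    (hP1 : P ≠ 1) (hP' : P' ≠ 0) :
    (P⁻¹ - 1) * ((P' - P) / ((1 - P) * P')) = (P⁻¹ - 1) - (P'⁻¹ - 1) := by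
  have h1P : 1 - P ≠ 0 := sub_ne_zero.mpr (Ne.symm hP1)
  field_simp
  ring

theorem inv_sub_inv_of_eq_mul_inv_mul {K : Type*} [Field K] {p P P' : K}
    (h : P = p * (1 + p)⁻¹ * P') (hP : P ≠ 0) : P⁻¹ - P'⁻¹ = (P * (1 + p))⁻¹ := by
  have h1p : 1 + p ≠ 0 := fun h0 => hP (by simp [h, h0])
  have hp : p ≠ 0 := fun h0 => hP (by simp [h, h0])
  have hP' : P' ≠ 0 := fun h0 => hP (by simp [h, h0])
  rw [h]
  field_simp
  ring

theorem tilde_u_convex_combination_general {n : ℕ}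
    (p P θ : ℕ → ℝ)
    (hP0 : P 0 = 1)
    (hPrec : ∀ t ≥ 1, P t = p t * (1 + p t)⁻¹ * P (t - 1))
    (hPlt : ∀ t ≥ 1, 0 < P t ∧ P t < 1)
    (hθ : ∀ t ≥ 1, θ t = (P (t - 1) - P t) / ((1 - P t) * P (t - 1)))
    (u ut : ℕ → EuclideanSpace ℝ (Fin n))
    (hutrec : ∀ t ≥ 1, ut t = (1 - θ t) • ut (t - 1) + θ t • u t) :
    ∀ t ≥ 1, ut t =
      ∑ i ∈ Finset.Icc 1 t, (P t / ((1 - P t) * P i * (1 + p i))) • u i := by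
  intro t ht
  have hPne : ∀ s, P s ≠ 0 := fun s => by
    rcases Nat.eq_zero_or_pos s with rfl | hs
    · simp [hP0]
    · exact (hPlt s hs).1.ne'
  have hw : (P t)⁻¹ - 1 ≠ 0 := by
    rw [inv_sub_one_eq_one_sub_div (hPne t)]
    exact div_ne_zero (sub_ne_zero.mpr (hPlt t ht).2.ne') (hPne t)
  have htelescope := smul_eq_smul_add_sum_of_affine_rec (fun s => (P s)⁻¹ - 1) θ ut u
    (fun s hs => by
      rw [hθ s hs]
      exact inv_sub_one_mul_sub_div_eq_sub (hPne s) (hPlt s hs).2.ne (hPne _))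
    hutrec t
  rw [← inv_smul_smul₀ hw (ut t), htelescope, hP0, inv_one, sub_self, zero_smul, zero_add,
    smul_sum]
  refine sum_congr rfl fun i hi => ?_
  rw [sub_sub_sub_cancel_right, inv_sub_inv_of_eq_mul_inv_mul (hPrec i (mem_Icc.mp hi).1) (hPne i),
    smul_smul, inv_sub_one_eq_one_sub_div (hPne t), inv_div, mul_assoc (1 - P t), ← div_div,
    div_eq_mul_inv (P t / (1 - P t))]

/-- with `P_0 = 1`, `P_t = p_t (1+p_t)⁻¹ P_{t−1}` (`p_t > 0`, so
`0 < P_t < 1` for `t ≥ 1`), `θ_t = (P_{t−1} − P_t)/((1 − P_t) P_{t−1})`, and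
`ũ_0 = u_0`, `ũ_t = (1 − θ_t) ũ_{t−1} + θ_t u_t`, one has for every `t ≥ 1`:
`ũ_t = Σ_{i=1}^{t} [P_t / ((1 − P_t) P_i (1 + p_i))] u_i`. -/
theorem tilde_u_convex_combination {n : ℕ}
    (p P θ : ℕ → ℝ)
    (hp : ∀ t ≥ 1, 0 < p t)
    (hP0 : P 0 = 1)
    (hPrec : ∀ t ≥ 1, P t = p t * (1 + p t)⁻¹ * P (t - 1))
    (hPlt : ∀ t ≥ 1, 0 < P t ∧ P t < 1)
    (hθ : ∀ t ≥ 1, θ t = (P (t - 1) - P t) / ((1 - P t) * P (t - 1)))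
    (u ut : ℕ → EuclideanSpace ℝ (Fin n))
    (hut0 : ut 0 = u 0)
    (hutrec : ∀ t ≥ 1, ut t = (1 - θ t) • ut (t - 1) + θ t • u t) :
    ∀ t ≥ 1, ut t =
      ∑ i ∈ Finset.Icc 1 t, (P t / ((1 - P t) * P i * (1 + p i))) • u i :=
  tilde_u_convex_combination_general p P θ hP0 hPrec hPlt hθ u ut hutrec
end

section
/- Let X ⊆ ℝⁿ be a compact convex set, let ‖·‖ be a norm on ℝⁿ with dual norm ‖·‖_*, and let ν : ℝⁿ → ℝ be differentiable and 1-strongly convex w.r.t. ‖·‖ with Bregman divergence V. Let h : ℝⁿ → ℝ be convex, let F : ℝⁿ → ℝ be convex and differentiable with F(x) ≤ F(y) + ⟨∇F(y), x − y⟩ + G̃ ‖x − y‖ for all x, y ∈ X (with G̃ ≥ 0), and let β > 0. Let (p_t)_{t ≥ 1} be positive reals, P_0 = 1, P_t = p_t (1 + p_t)^{−1} P_{t−1}, θ_t = (P_{t−1} − P_t)/((1 − P_t) P_{t−1}). Fix x ∈ X and set u_0 = ũ_0 = x; for each t ≥ 1 let g_t ∈ ℝⁿ, δ_t = g_t − ∇F(u_{t−1}),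 let u_t be a minimizer over X of u ↦ h(u) + ⟨g_t, u⟩ + β V(x, u) + β p_t V(u_{t−1}, u), and ũ_t = (1 − θ_t) ũ_{t−1} + θ_t u_t. Define Φ(u) = h(u) + F(u) + β V(x, u). Then for every t ≥ 1 and every u ∈ X: β/(1 − P_t) · V(u_t, u) + Φ(ũ_t) − Φ(u) ≤ β P_t/(1 − P_t) · V(u_0, u) + (P_t/(1 − P_t)) · Σ_{i=1}^{t} (1/(P_{i−1} p_i)) [ (G̃ + ‖δ_i‖_*)² / (2 β p_i) + ⟨δ_i, u − u_{i−1}⟩ ]. -/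
open Set Finset
open scoped RealInnerProductSpace

/-- The Bregman divergence `V(x, y) = ν(y) − ν(x) − ⟨∇ν(x), y − x⟩` associated with a
differentiable function `ν`. -/
noncomputable def bregman {n : ℕ} (ν : EuclideanSpace ℝ (Fin n) → ℝ)
    (x y : EuclideanSpace ℝ (Fin n)) : ℝ :=
  ν y - ν x - ⟪gradient ν x, y - x⟫

/-- The dual norm `‖y‖_* = max {⟨x, y⟩ : ‖x‖ ≤ 1}` of a norm `nrm` on `ℝⁿ`. -/
noncomputable def dualNorm {n : ℕ} (nrm : EuclideanSpace ℝ (Fin n) → ℝ)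
    (y : EuclideanSpace ℝ (Fin n)) : ℝ :=
  sSup {s : ℝ | ∃ x, nrm x ≤ 1 ∧ ⟪x, y⟫ = s}

/-!
Each prox step is controlled by the three-point inequality of the Bregman proximal map: `u_t`
is optimal for the convex part `h + ⟪g_t, ·⟫` against the linearisation of
`βV(x, ·) + βp_t V(u_{t-1}, ·)`, which leaves the gain `β(1 + p_t)V(u_t, u)`. The smoothness-type
bound on `F`, the dual-norm inequality for the gradient error `δ_t` and Young's inequality absorb
the term `(G̃ + ‖δ_t‖_*)‖u_t − u_{t−1}‖` into `βp_t V(u_{t−1}, u_t)`. Convexity of `Φ` along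
`ũ_t = (1 − θ_t)ũ_{t−1} + θ_t u_t` turns this into a one-step recursion, and since
`θ_t (1 − P_t)(1 + p_t) = 1`, the potential `((1 − P_t)/P_t)(Φ(ũ_t) − Φ(u)) + (β/P_t)V(u_t, u)`
grows by at most the `t`-th summand at each step; telescoping and multiplying by `P_t/(1 − P_t)`
gives the bound.
-/

open Filter

section FirstOrder

variable {E : Type*} [NormedAddCommGroup E] [NormedSpace ℝ E]

lemma IsMinOn.le_add_fderiv_of_convexOn {X : Set E} {φ g : E → ℝ} {b w : E}
    (hX : Convex ℝ X) (hφ : ConvexOn ℝ X φ) (hg : DifferentiableAt ℝ g b)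
    (hmin : IsMinOn (fun v => φ v + g v) X b) (hb : b ∈ X) (hw : w ∈ X) :
    φ b ≤ φ w + fderiv ℝ g b (w - b) := by
  have hlim := hg.hasFDerivAt.lim_real (w - b)
  have hdiff : ∀ᶠ c : ℝ in atTop, φ b - φ w ≤ c • (g (b + c⁻¹ • (w - b)) - g b) := by
    filter_upwards [eventually_ge_atTop 1] with c hc
    have hs : c⁻¹ ∈ Icc (0 : ℝ) 1 := ⟨by positivity, inv_le_one_of_one_le₀ hc⟩
    have hmem := hX.add_smul_sub_mem hb hw hs
    have hopt : φ b + g b ≤ φ _ + g _ := hmin hmem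
    have hconv : φ (b + c⁻¹ • (w - b)) ≤ (1 - c⁻¹) * φ b + c⁻¹ * φ w := by
      have := hφ.2 hb hw (sub_nonneg.2 hs.2) hs.1 (sub_add_cancel 1 c⁻¹)
      rwa [show (1 - c⁻¹) • b + c⁻¹ • w = b + c⁻¹ • (w - b) by
        rw [smul_sub, sub_smul, one_smul]; abel] at this
    simp only [smul_eq_mul]
    have hc0 : (0 : ℝ) < c := by linarith
    have key : c⁻¹ * (φ b - φ w) ≤ g (b + c⁻¹ • (w - b)) - g b := by linarith
    calc φ b - φ w = c * (c⁻¹ * (φ b - φ w)) := by field_simp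
      _ ≤ c * (g (b + c⁻¹ • (w - b)) - g b) := by gcongr
  linarith [ge_of_tendsto hlim hdiff]

lemma ConvexOn.add_fderiv_le {f : E → ℝ} (hf : ConvexOn ℝ univ f) {a : E}
    (ha : DifferentiableAt ℝ f a) (b : E) : f a + fderiv ℝ f a (b - a) ≤ f b := by
  have hmin : IsMinOn (fun v => f v + -f v) univ a := fun v _ => by simp
  have := hmin.le_add_fderiv_of_convexOn convex_univ hf ha.neg (mem_univ a) (mem_univ b)
  rw [fderiv_neg, neg_apply] at this
  linarith

end FirstOrder

section Bregman

variable {n : ℕ}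

lemma convexOn_univ_of_bregman_nonneg {ν : EuclideanSpace ℝ (Fin n) → ℝ}
    (hν : ∀ a b, 0 ≤ bregman ν a b) : ConvexOn ℝ univ ν := by
  refine ⟨convex_univ, fun p _ q _ α β hα hβ hαβ => ?_⟩
  set z := α • p + β • q
  have hz : α • (p - z) + β • (q - z) = 0 := by
    linear_combination (norm := module) hαβ • (-z)
  have hinner : α * ⟪gradient ν z, p - z⟫ + β * ⟪gradient ν z, q - z⟫ = 0 := by
    rw [← real_inner_smul_right, ← real_inner_smul_right, ← inner_add_right, hz,
      inner_zero_right]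
  have hp := mul_le_mul_of_nonneg_left (hν z p) hα
  have hq := mul_le_mul_of_nonneg_left (hν z q) hβ
  simp only [bregman, smul_eq_mul] at hp hq ⊢
  have hsum : α * ν z + β * ν z = ν z := by rw [← add_mul, hαβ, one_mul]
  nlinarith

lemma ConvexOn.bregman_right {ν : EuclideanSpace ℝ (Fin n) → ℝ} (hν : ConvexOn ℝ univ ν)
    (x : EuclideanSpace ℝ (Fin n)) : ConvexOn ℝ univ (bregman ν x) := by
  have hV : bregman ν x = fun y => ν y + ⟪-gradient ν x, y⟫ + (⟪gradient ν x, x⟫ - ν x) := by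
    ext y
    simp only [bregman, inner_sub_right, inner_neg_left]
    ring
  rw [hV]
  exact (hν.add ((innerSL ℝ _).toLinearMap.convexOn convex_univ)).add_const _

lemma IsMinOn.add_bregman_le {X : Set (EuclideanSpace ℝ (Fin n))} (hX : Convex ℝ X)
    {φ ν : EuclideanSpace ℝ (Fin n) → ℝ} (hφ : ConvexOn ℝ X φ) (hν : Differentiable ℝ ν)
    {c₁ c₂ : ℝ} {y₁ y₂ b w : EuclideanSpace ℝ (Fin n)}
    (hmin : IsMinOn (fun v => φ v + c₁ * bregman ν y₁ v + c₂ * bregman ν y₂ v) X b)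
    (hb : b ∈ X) (hw : w ∈ X) :
    φ b + c₁ * bregman ν y₁ b + c₂ * bregman ν y₂ b + (c₁ + c₂) * bregman ν b w ≤
      φ w + c₁ * bregman ν y₁ w + c₂ * bregman ν y₂ w := by
  set m := -(c₁ • gradient ν y₁ + c₂ • gradient ν y₂)
  set K := c₁ * (⟪gradient ν y₁, y₁⟫ - ν y₁) + c₂ * (⟪gradient ν y₂, y₂⟫ - ν y₂)
  have hsplit : ∀ v, c₁ * bregman ν y₁ v + c₂ * bregman ν y₂ v =
      (⟪m, v⟫ + K) + (c₁ + c₂) * ν v := by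
    intro v
    simp only [m, K, bregman, inner_neg_left, inner_add_left, real_inner_smul_left,
      inner_sub_right]
    ring
  have hψ : ConvexOn ℝ X (fun v => φ v + (⟪m, v⟫ + K)) :=
    hφ.add (((innerSL ℝ m).toLinearMap.convexOn hX).add_const K)
  have hmin' : IsMinOn (fun v => (φ v + (⟪m, v⟫ + K)) + (c₁ + c₂) * ν v) X b := by
    simpa only [add_assoc, hsplit] using hmin
  have key := hmin'.le_add_fderiv_of_convexOn hX hψ ((hν b).const_mul _) hb hw
  rw [fderiv_const_mul (hν b), smul_apply, smul_eq_mul,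
    ← inner_gradient_left] at key
  rw [show bregman ν b w = ν w - ν b - ⟪gradient ν b, w - b⟫ from rfl]
  linarith [hsplit b, hsplit w]

end Bregman

lemma Seminorm.exists_pos_mul_norm_le {E : Type*} [NormedAddCommGroup E] [NormedSpace ℝ E]
    [FiniteDimensional ℝ E] (p : Seminorm ℝ E) (hp : ∀ x, p x = 0 → x = 0) :
    ∃ c > 0, ∀ x, c * ‖x‖ ≤ p x := by
  rcases subsingleton_or_nontrivial E with hE | hE
  · exact ⟨1, one_pos, fun x => by simp [Subsingleton.elim x 0]⟩
  -- `p` is convex, hence continuous, and attains a positive minimum on the unit sphere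
  obtain ⟨y, hy, hmin⟩ := (isCompact_sphere (0 : E) 1).exists_isMinOn
    (NormedSpace.sphere_nonempty.mpr zero_le_one)
    p.convexOn.locallyLipschitz.continuous.continuousOn
  have hy1 : ‖y‖ = 1 := by simpa using hy
  refine ⟨p y, (apply_nonneg p y).lt_of_ne' fun h0 => by simp [hp y h0] at hy1, fun x => ?_⟩
  rcases eq_or_ne x 0 with rfl | hx
  · simp
  have hx0 : 0 < ‖x‖ := norm_pos_iff.mpr hx
  have hle : p y ≤ p (‖x‖⁻¹ • x) := hmin (by simp [norm_smul, hx])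
  rw [map_smul_eq_mul, norm_inv, norm_norm] at hle
  calc p y * ‖x‖ ≤ ‖x‖⁻¹ * p x * ‖x‖ := by gcongr
    _ = p x := by field_simp

section DualNorm

variable {n : ℕ} (p : Seminorm ℝ (EuclideanSpace ℝ (Fin n))) (hp : ∀ x, p x = 0 → x = 0)
include hp

lemma bddAbove_inner_of_seminorm_le_one (y : EuclideanSpace ℝ (Fin n)) :
    BddAbove {s : ℝ | ∃ x, p x ≤ 1 ∧ ⟪x, y⟫ = s} := by
  obtain ⟨c, hc, hlow⟩ := p.exists_pos_mul_norm_le hp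
  refine ⟨c⁻¹ * ‖y‖, ?_⟩
  rintro _ ⟨x, hx, rfl⟩
  have hxc : ‖x‖ ≤ c⁻¹ := by
    rw [← one_div, le_div_iff₀' hc]
    exact (hlow x).trans hx
  calc ⟪x, y⟫ ≤ ‖x‖ * ‖y‖ := real_inner_le_norm x y
    _ ≤ c⁻¹ * ‖y‖ := by gcongr

lemma inner_le_dualNorm_mul (x y : EuclideanSpace ℝ (Fin n)) :
    ⟪x, y⟫ ≤ dualNorm p y * p x := by
  rcases (apply_nonneg p x).eq_or_lt' with hx | hx
  · simp [hp x hx]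
  have hmem : ⟪(p x)⁻¹ • x, y⟫ ∈ {s : ℝ | ∃ x, p x ≤ 1 ∧ ⟪x, y⟫ = s} :=
    ⟨(p x)⁻¹ • x, by rw [map_smul_eq_mul, norm_inv, Real.norm_of_nonneg hx.le,
      inv_mul_cancel₀ hx.ne'], rfl⟩
  have hle := le_csSup (bddAbove_inner_of_seminorm_le_one p hp y) hmem
  rw [real_inner_smul_left, inv_mul_le_iff₀ hx] at hle
  rwa [mul_comm] at hle

end DualNorm

lemma le_add_sum_Icc_of_le_add {α : Type*} [AddCommMonoid α] [PartialOrder α]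
    [IsOrderedAddMonoid α] {a b : ℕ → α} (h : ∀ t ≥ 1, a t ≤ a (t - 1) + b t) :
    ∀ t, a t ≤ a 0 + ∑ i ∈ Icc 1 t, b i
  | 0 => by simp
  | t + 1 => by
    rw [sum_Icc_succ_top (Nat.le_add_left 1 t), ← add_assoc]
    exact (h (t + 1) (Nat.le_add_left 1 t)).trans (add_le_add_left (le_add_sum_Icc_of_le_add h t) _)

section Weights

variable {q Q R θ : ℝ} (hq : 0 < q) (hQ : 0 < Q) (hQ1 : Q ≤ 1) (hR : R = q * (1 + q)⁻¹ * Q)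
include hq hQ hQ1 hR

lemma weight_mem_Ioo : R ∈ Set.Ioo 0 1 := by
  subst hR
  have : q * (1 + q)⁻¹ < 1 := by rw [← div_eq_mul_inv, div_lt_one (by linarith)]; linarith
  exact ⟨by positivity, by nlinarith [mul_pos hq (inv_pos.2 (by linarith : 0 < 1 + q))]⟩

variable (hθ : θ = (Q - R) / ((1 - R) * Q))
include hθ

lemma step_weight_eq : θ = (1 + q - q * Q)⁻¹ := by
  subst hθ hR
  have : 1 + q - q * Q ≠ 0 := by nlinarith
  field_simp
  ring

lemma step_weight_mem_Ioc : θ ∈ Set.Ioc 0 1 := by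
  rw [step_weight_eq hq hQ hQ1 hR hθ]
  exact ⟨inv_pos.2 (by nlinarith), inv_le_one_of_one_le₀ (by nlinarith)⟩

lemma potential_le_of_step_le {β D D' V V' B : ℝ}
    (hstep : D' + θ * (β * (1 + q)) * V' ≤ (1 - θ) * D + θ * (β * q * V + B)) :
    (1 - R) / R * D' + β / R * V' ≤ (1 - Q) / Q * D + β / Q * V + 1 / (Q * q) * B := by
  obtain ⟨hR0, hR1⟩ := weight_mem_Ioo hq hQ hQ1 hR
  obtain ⟨d, hd⟩ : ∃ d, d = 1 + q - q * Q := ⟨_, rfl⟩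
  have hd0 : d ≠ 0 := by nlinarith
  have hq1 : 1 + q ≠ 0 := by positivity
  have h1R : 1 - R = d / (1 + q) := by rw [hR, hd]; field_simp
  rw [step_weight_eq hq hQ hQ1 hR hθ, ← hd] at hstep
  refine le_of_eq_of_le ?_
    ((mul_le_mul_of_nonneg_left hstep (div_nonneg (sub_nonneg.2 hR1.le) hR0.le)).trans_eq ?_)
  · rw [h1R, hR]
    field_simp
  · rw [h1R, hR]
    field_simp
    subst hd
    ring

end Weights

lemma weights_mem_Ioc {p P : ℕ → ℝ} (hp : ∀ t ≥ 1, 0 < p t) (hP0 : P 0 = 1)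
    (hPrec : ∀ t ≥ 1, P t = p t * (1 + p t)⁻¹ * P (t - 1)) : ∀ t, P t ∈ Set.Ioc 0 1
  | 0 => by simp [hP0]
  | t + 1 =>
    have hPt := weights_mem_Ioc hp hP0 hPrec t
    Set.Ioo_subset_Ioc_self <|
      weight_mem_Ioo (hp (t + 1) t.succ_pos) hPt.1 hPt.2 (hPrec (t + 1) t.succ_pos)

section ProxStep

variable {n : ℕ} {X : Set (EuclideanSpace ℝ (Fin n))} {p : Seminorm ℝ (EuclideanSpace ℝ (Fin n))}
  {ν h F : EuclideanSpace ℝ (Fin n) → ℝ} {G β q : ℝ} {x a b w g : EuclideanSpace ℝ (Fin n)}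

lemma prox_step_le (hX : Convex ℝ X) (hp : ∀ x, p x = 0 → x = 0) (hν : Differentiable ℝ ν)
    (hν_strong : ∀ x y, (1 / 2) * (p (x - y)) ^ 2 ≤ bregman ν x y)
    (hh : ConvexOn ℝ univ h) (hF : ConvexOn ℝ univ F) (hF_diff : Differentiable ℝ F)
    (hF_bound : ∀ x ∈ X, ∀ y ∈ X, F x ≤ F y + ⟪gradient F y, x - y⟫ + G * p (x - y))
    (hβ : 0 < β) (hq : 0 < q) (ha : a ∈ X) (hb : b ∈ X) (hw : w ∈ X)
    (hmin : IsMinOn (fun v => h v + ⟪g, v⟫ + β * bregman ν x v + β * q * bregman ν a v) X b) :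
    h b + F b + β * bregman ν x b + β * (1 + q) * bregman ν b w ≤
      h w + F w + β * bregman ν x w + β * q * bregman ν a w +
        ((G + dualNorm p (g - gradient F a)) ^ 2 / (2 * β * q) +
          ⟪g - gradient F a, w - a⟫) := by
  set δ := g - gradient F a
  set r := p (a - b)
  have hφ : ConvexOn ℝ X (fun v => h v + ⟪g, v⟫) :=
    (hh.subset (subset_univ X) hX).add ((innerSL ℝ g).toLinearMap.convexOn hX)
  have hprox := hmin.add_bregman_le hX hφ hν hb hw
  have hFb := hF_bound b hb a ha
  rw [map_sub_rev p] at hFb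
  have hFw : F a + ⟪gradient F a, w - a⟫ ≤ F w := by
    rw [inner_gradient_left]; exact hF.add_fderiv_le (hF_diff a) w
  have hδ : ⟪δ, a - b⟫ ≤ dualNorm p δ * r := by
    rw [real_inner_comm]; exact inner_le_dualNorm_mul p hp _ _
  have hab : β * q * ((1 / 2) * r ^ 2) ≤ β * q * bregman ν a b := by
    gcongr; exact hν_strong a b
  have young : (G + dualNorm p δ) * r ≤ β * q * ((1 / 2) * r ^ 2) +
      (G + dualNorm p δ) ^ 2 / (2 * β * q) := by
    rw [← sub_le_iff_le_add', le_div_iff₀ (by positivity)]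
    nlinarith [sq_nonneg (G + dualNorm p δ - β * q * r)]
  have hg : ⟪g, b⟫ - ⟪g, w⟫ =
      ⟪gradient F a, b - a⟫ - ⟪gradient F a, w - a⟫ - ⟪δ, w - a⟫ - ⟪δ, a - b⟫ := by
    simp only [δ, inner_sub_left, inner_sub_right]; ring
  linarith

lemma averaged_prox_step_le (hX : Convex ℝ X) (hp : ∀ x, p x = 0 → x = 0)
    (hν : Differentiable ℝ ν) (hν_strong : ∀ x y, (1 / 2) * (p (x - y)) ^ 2 ≤ bregman ν x y)
    (hh : ConvexOn ℝ univ h) (hF : ConvexOn ℝ univ F) (hF_diff : Differentiable ℝ F)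
    (hF_bound : ∀ x ∈ X, ∀ y ∈ X, F x ≤ F y + ⟪gradient F y, x - y⟫ + G * p (x - y))
    (hβ : 0 < β) (hq : 0 < q) (ha : a ∈ X) (hb : b ∈ X) (hw : w ∈ X)
    (hmin : IsMinOn (fun v => h v + ⟪g, v⟫ + β * bregman ν x v + β * q * bregman ν a v) X b)
    {θ : ℝ} (hθ : θ ∈ Set.Icc 0 1) (ũ : EuclideanSpace ℝ (Fin n)) :
    (h ((1 - θ) • ũ + θ • b) + F ((1 - θ) • ũ + θ • b) + β * bregman ν x ((1 - θ) • ũ + θ • b) -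
        (h w + F w + β * bregman ν x w)) + θ * (β * (1 + q)) * bregman ν b w ≤
      (1 - θ) * ((h ũ + F ũ + β * bregman ν x ũ) - (h w + F w + β * bregman ν x w)) +
        θ * (β * q * bregman ν a w +
          ((G + dualNorm p (g - gradient F a)) ^ 2 / (2 * β * q) + ⟪g - gradient F a, w - a⟫)) := by
  have hν_conv : ConvexOn ℝ univ ν :=
    convexOn_univ_of_bregman_nonneg fun a b =>
      (mul_nonneg (by norm_num) (sq_nonneg _)).trans (hν_strong a b)
  have hΦ := (hh.add hF).add ((hν_conv.bregman_right x).smul hβ.le)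
  have hconv := hΦ.2 (mem_univ ũ) (mem_univ b) (sub_nonneg.2 hθ.2) hθ.1 (sub_add_cancel 1 θ)
  have hstep := prox_step_le hX hp hν hν_strong hh hF hF_diff hF_bound hβ hq ha hb hw hmin
  simp only [Pi.add_apply, smul_eq_mul] at hconv
  nlinarith [mul_le_mul_of_nonneg_left hstep hθ.1]

end ProxStep

theorem prox_sliding_inner_bound_general {n : ℕ}
    (X : Set (EuclideanSpace ℝ (Fin n))) (hX_conv : Convex ℝ X)
    -- `nrm` is a norm `‖·‖` on `ℝⁿ`
    (nrm : EuclideanSpace ℝ (Fin n) → ℝ)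
    (hn_add : ∀ x y, nrm (x + y) ≤ nrm x + nrm y)
    (hn_smul : ∀ (c : ℝ) x, nrm (c • x) = |c| * nrm x)
    (hn_def : ∀ x, nrm x = 0 → x = 0)
    -- `ν` is differentiable and 1-strongly convex w.r.t. `nrm`, `V = bregman ν`
    (ν : EuclideanSpace ℝ (Fin n) → ℝ) (hν_diff : Differentiable ℝ ν)
    (hν_strong : ∀ x y, (1 / 2) * (nrm (x - y)) ^ 2 ≤ bregman ν x y)
    -- `h` is convex
    (h : EuclideanSpace ℝ (Fin n) → ℝ) (hh_conv : ConvexOn ℝ Set.univ h)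
    -- `F` is convex, differentiable, with "2G̃-type" smoothness bound on `X`
    (F : EuclideanSpace ℝ (Fin n) → ℝ) (hF_conv : ConvexOn ℝ Set.univ F)
    (hF_diff : Differentiable ℝ F)
    (Gt : ℝ)
    (hF_bound : ∀ x ∈ X, ∀ y ∈ X,
      F x ≤ F y + ⟪gradient F y, x - y⟫ + Gt * nrm (x - y))
    (β : ℝ) (hβ : 0 < β)
    -- the sequences `p_t`, `P_t`, `θ_t`
    (p P θ : ℕ → ℝ)
    (hp : ∀ t ≥ 1, 0 < p t)
    (hP0 : P 0 = 1)
    (hPrec : ∀ t ≥ 1, P t = p t * (1 + p t)⁻¹ * P (t - 1))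
    (hθ : ∀ t ≥ 1, θ t = (P (t - 1) - P t) / ((1 - P t) * P (t - 1)))
    -- the iterates of the `PS` procedure started from `x ∈ X`
    (x : EuclideanSpace ℝ (Fin n)) (hx : x ∈ X)
    (u ut gvec δ : ℕ → EuclideanSpace ℝ (Fin n))
    (hu0 : u 0 = x)
    (hδ : ∀ t ≥ 1, δ t = gvec t - gradient F (u (t - 1)))
    (humem : ∀ t ≥ 1, u t ∈ X)
    (humin : ∀ t ≥ 1, IsMinOn (fun v => h v + ⟪gvec t, v⟫ +
      β * bregman ν x v + β * p t * bregman ν (u (t - 1)) v) X (u t))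
    (hutrec : ∀ t ≥ 1, ut t = (1 - θ t) • ut (t - 1) + θ t • u t) :
    -- conclusion
    ∀ t ≥ 1, ∀ w ∈ X,
      β / (1 - P t) * bregman ν (u t) w +
          ((h (ut t) + F (ut t) + β * bregman ν x (ut t)) -
            (h w + F w + β * bregman ν x w)) ≤
        β * P t / (1 - P t) * bregman ν (u 0) w +
          P t / (1 - P t) *
            ∑ i ∈ Finset.Icc 1 t, (1 / (P (i - 1) * p i)) *
              ((Gt + dualNorm nrm (δ i)) ^ 2 / (2 * β * p i) +
                ⟪δ i, w - u (i - 1)⟫) := by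
  intro t ht w hw
  let pn : Seminorm ℝ (EuclideanSpace ℝ (Fin n)) :=
    Seminorm.of nrm hn_add fun c x => by rw [hn_smul, Real.norm_eq_abs]
  have hP := weights_mem_Ioc hp hP0 hPrec
  have hu : ∀ t, u t ∈ X
    | 0 => hu0 ▸ hx
    | t + 1 => humem (t + 1) t.succ_pos
  set Φ := fun v => h v + F v + β * bregman ν x v
  set Ψ : ℕ → ℝ := fun t => (1 - P t) / P t * (Φ (ut t) - Φ w) + β / P t * bregman ν (u t) w
  have hΨ : ∀ t ≥ 1, Ψ t ≤ Ψ (t - 1) + 1 / (P (t - 1) * p t) *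
      ((Gt + dualNorm nrm (δ t)) ^ 2 / (2 * β * p t) + ⟪δ t, w - u (t - 1)⟫) := by
    intro t ht
    refine potential_le_of_step_le (hp t ht) (hP _).1 (hP _).2 (hPrec t ht) (hθ t ht) ?_
    rw [hutrec t ht, hδ t ht]
    exact averaged_prox_step_le (p := pn) hX_conv hn_def hν_diff hν_strong hh_conv hF_conv hF_diff
      hF_bound hβ (hp t ht) (hu _) (hu t) hw (humin t ht)
      (Set.Ioc_subset_Icc_self (step_weight_mem_Ioc (hp t ht) (hP _).1 (hP _).2 (hPrec t ht)
        (hθ t ht))) _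
  have hΨ0 : Ψ 0 = β * bregman ν (u 0) w := by simp [Ψ, hP0]
  obtain ⟨hPt0, hPt1⟩ := weight_mem_Ioo (hp t ht) (hP _).1 (hP _).2 (hPrec t ht)
  have hc : 0 < P t / (1 - P t) := div_pos hPt0 (sub_pos.2 hPt1)
  calc _ = P t / (1 - P t) * Ψ t := by simp only [Ψ, Φ]; field_simp; ring
    _ ≤ P t / (1 - P t) * (Ψ 0 + _) := by gcongr; exact le_add_sum_Icc_of_le_add hΨ t
    _ = _ := by rw [hΨ0]; ring

/-- analysis of the prox-sliding procedure `PS`. -/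
theorem prox_sliding_inner_bound {n : ℕ}
    (X : Set (EuclideanSpace ℝ (Fin n))) (hX_comp : IsCompact X) (hX_conv : Convex ℝ X)
    -- `nrm` is a norm `‖·‖` on `ℝⁿ`
    (nrm : EuclideanSpace ℝ (Fin n) → ℝ)
    (hn_add : ∀ x y, nrm (x + y) ≤ nrm x + nrm y)
    (hn_smul : ∀ (c : ℝ) x, nrm (c • x) = |c| * nrm x)
    (hn_def : ∀ x, nrm x = 0 → x = 0)
    -- `ν` is differentiable and 1-strongly convex w.r.t. `nrm`, `V = bregman ν`
    (ν : EuclideanSpace ℝ (Fin n) → ℝ) (hν_diff : Differentiable ℝ ν)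
    (hν_strong : ∀ x y, (1 / 2) * (nrm (x - y)) ^ 2 ≤ bregman ν x y)
    -- `h` is convex
    (h : EuclideanSpace ℝ (Fin n) → ℝ) (hh_conv : ConvexOn ℝ Set.univ h)
    -- `F` is convex, differentiable, with "2G̃-type" smoothness bound on `X`
    (F : EuclideanSpace ℝ (Fin n) → ℝ) (hF_conv : ConvexOn ℝ Set.univ F)
    (hF_diff : Differentiable ℝ F)
    (Gt : ℝ) (hGt : 0 ≤ Gt)
    (hF_bound : ∀ x ∈ X, ∀ y ∈ X,
      F x ≤ F y + ⟪gradient F y, x - y⟫ + Gt * nrm (x - y))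
    (β : ℝ) (hβ : 0 < β)
    -- the sequences `p_t`, `P_t`, `θ_t`
    (p P θ : ℕ → ℝ)
    (hp : ∀ t ≥ 1, 0 < p t)
    (hP0 : P 0 = 1)
    (hPrec : ∀ t ≥ 1, P t = p t * (1 + p t)⁻¹ * P (t - 1))
    (hθ : ∀ t ≥ 1, θ t = (P (t - 1) - P t) / ((1 - P t) * P (t - 1)))
    -- the iterates of the `PS` procedure started from `x ∈ X`
    (x : EuclideanSpace ℝ (Fin n)) (hx : x ∈ X)
    (u ut gvec δ : ℕ → EuclideanSpace ℝ (Fin n))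
    (hu0 : u 0 = x) (hut0 : ut 0 = x)
    (hδ : ∀ t ≥ 1, δ t = gvec t - gradient F (u (t - 1)))
    (humem : ∀ t ≥ 1, u t ∈ X)
    (humin : ∀ t ≥ 1, IsMinOn (fun v => h v + ⟪gvec t, v⟫ +
      β * bregman ν x v + β * p t * bregman ν (u (t - 1)) v) X (u t))
    (hutrec : ∀ t ≥ 1, ut t = (1 - θ t) • ut (t - 1) + θ t • u t) :
    -- conclusion
    ∀ t ≥ 1, ∀ w ∈ X,
      β / (1 - P t) * bregman ν (u t) w +
          ((h (ut t) + F (ut t) + β * bregman ν x (ut t)) -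
            (h w + F w + β * bregman ν x w)) ≤
        β * P t / (1 - P t) * bregman ν (u 0) w +
          P t / (1 - P t) *
            ∑ i ∈ Finset.Icc 1 t, (1 / (P (i - 1) * p i)) *
              ((Gt + dualNorm nrm (δ i)) ^ 2 / (2 * β * p i) +
                ⟪δ i, w - u (i - 1)⟫) :=
  prox_sliding_inner_bound_general X hX_conv nrm hn_add hn_smul hn_def ν hν_diff hν_strong h hh_conv
    F hF_conv hF_diff Gt hF_bound β hβ p P θ hp hP0 hPrec hθ x hx u ut gvec δ hu0 hδ humem humin
    hutrec
end

section
/- Let ‖·‖ be a norm on ℝⁿ with dual norm ‖·‖_*, let ν : ℝⁿ → ℝ be differentiable and 1-strongly convex w.r.t. ‖·‖ with Bregman divergence V, let g : ℝⁿ → ℝ be convex, differentiable and L-smooth w.r.t. ‖·‖ (i.e., g(x) ≤ g(y) + ⟨∇g(y), x − y⟩ + (L/2)‖x − y‖² for all x, y), let F : ℝⁿ → ℝ be convex, and set Ψ = F + g. Let x̄', x', x̃ ∈ ℝⁿ, γ ∈ [0, 1], β ≥ 0 with β − L γ ≥ 0. Define x̲ = (1 − γ) x̄' + γ x', x̄ =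 (1 − γ) x̄' + γ x̃, and Φ(u) = g(x̲) + ⟨∇g(x̲), u − x̲⟩ + F(u) + β V(x', u). Then Ψ(x̄) ≤ (1 − γ) Ψ(x̄') + γ Φ(x̃). -/
/-!
Since `x̄ - x̲ = γ (x̃ - x')`, `L`-smoothness bounds `g(x̄)` by the linear model of `g` at `x̲`
plus `(L/2) γ² ‖x̃ - x'‖²`. The model is affine, so at `x̄` it is
the `(1 - γ, γ)` average of its values at `x̄'` (bounded by `g(x̄')` by convexity) and at `x̃`.
Strong convexity of `ν` and `Lγ ≤ β` bound the quadratic term by `γ β V(x', x̃)`, and convexity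
of `F` handles `F(x̄)`.
-/

open Set
open scoped RealInnerProductSpace

theorem ConvexOn.add_fderiv_sub_le {E : Type*} [NormedAddCommGroup E] [NormedSpace ℝ E]
    {f : E → ℝ} {f' : E →L[ℝ] ℝ} {x : E} (hf : ConvexOn ℝ univ f) (hx : HasFDerivAt f f' x)
    (y : E) : f x + f' (y - x) ≤ f y := by
  have hline : ConvexOn ℝ univ (f ∘ AffineMap.lineMap (k := ℝ) x y) := by
    simpa using hf.comp_affineMap (AffineMap.lineMap (k := ℝ) x y)
  have hderiv : HasDerivAt (f ∘ AffineMap.lineMap (k := ℝ) x y) (f' (y - x)) 0 := by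
    simpa using hx.comp_hasDerivAt_of_eq (0 : ℝ) AffineMap.hasDerivAt_lineMap (by simp)
  have hslope := hline.le_slope_of_hasDerivAt (mem_univ 0) (mem_univ 1) zero_lt_one hderiv
  rw [slope_def_field] at hslope
  simp only [Function.comp_apply, AffineMap.lineMap_apply_zero, AffineMap.lineMap_apply_one,
    sub_zero, div_one] at hslope
  linarith

theorem ConvexOn.add_inner_gradient_sub_le {E : Type*} [NormedAddCommGroup E]
    [InnerProductSpace ℝ E] [CompleteSpace E] {f : E → ℝ} {x : E} (hf : ConvexOn ℝ univ f)
    (hx : DifferentiableAt ℝ f x) (y : E) : f x + ⟪gradient f x, y - x⟫ ≤ f y := by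
  simpa using hf.add_fderiv_sub_le (hasGradientAt_iff_hasFDerivAt.mp hx.hasGradientAt) y

theorem outer_step_inequality_general {n : ℕ}
    -- `nrm` is a norm `‖·‖` on `ℝⁿ`
    (nrm : EuclideanSpace ℝ (Fin n) → ℝ)
    (hn_smul : ∀ (c : ℝ) x, nrm (c • x) = |c| * nrm x)
    -- `ν` is differentiable and 1-strongly convex w.r.t. `nrm`, `V = bregman ν`
    (ν : EuclideanSpace ℝ (Fin n) → ℝ)
    (hν_strong : ∀ x y, (1 / 2) * (nrm (x - y)) ^ 2 ≤ bregman ν x y)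
    -- `g` is convex, differentiable and `L`-smooth w.r.t. `nrm`
    (g : EuclideanSpace ℝ (Fin n) → ℝ) (hg_conv : ConvexOn ℝ Set.univ g)
    (hg_diff : Differentiable ℝ g)
    (L : ℝ)
    (hg_smooth : ∀ x y, g x ≤ g y + ⟪gradient g y, x - y⟫ + L / 2 * (nrm (x - y)) ^ 2)
    -- `F` is convex
    (F : EuclideanSpace ℝ (Fin n) → ℝ) (hF_conv : ConvexOn ℝ Set.univ F)
    (xbar' x' xt : EuclideanSpace ℝ (Fin n))
    (γ : ℝ) (hγ : γ ∈ Set.Icc (0 : ℝ) 1)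
    (β : ℝ) (hβ : 0 ≤ β) (hβL : β - L * γ ≥ 0) :
    (fun u => F u + g u) ((1 - γ) • xbar' + γ • xt) ≤
      (1 - γ) * (fun u => F u + g u) xbar' +
        γ * (g ((1 - γ) • xbar' + γ • x') +
          ⟪gradient g ((1 - γ) • xbar' + γ • x'), xt - ((1 - γ) • xbar' + γ • x')⟫ +
          F xt + β * bregman ν x' xt) := by
  obtain ⟨hγ0, hγ1⟩ := hγ
  set xl := (1 - γ) • xbar' + γ • x'
  set xb := (1 - γ) • xbar' + γ • xt
  have hsmooth := hg_smooth xb xl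
  have hsplit : ⟪gradient g xl, xb - xl⟫ =
      (1 - γ) * ⟪gradient g xl, xbar' - xl⟫ + γ * ⟪gradient g xl, xt - xl⟫ := by
    rw [show xb - xl = (1 - γ) • (xbar' - xl) + γ • (xt - xl) by module, inner_add_right,
      real_inner_smul_right, real_inner_smul_right]
  have hg_lin := hg_conv.add_inner_gradient_sub_le (hg_diff xl) xbar'
  have hF := hF_conv.2 (mem_univ xbar') (mem_univ xt) (sub_nonneg.2 hγ1) hγ0 (by ring)
  have hquad : L / 2 * nrm (xb - xl) ^ 2 ≤ γ * β * bregman ν x' xt := by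
    rw [show xb - xl = (-γ) • (x' - xt) by module, hn_smul, abs_neg, abs_of_nonneg hγ0]
    linarith [mul_nonneg (mul_nonneg hγ0 hβ) (sub_nonneg.2 (hν_strong x' xt)),
      mul_nonneg (mul_nonneg hγ0 hβL) (sq_nonneg (nrm (x' - xt)))]
  simp only [smul_eq_mul] at hF ⊢
  linarith [mul_le_mul_of_nonneg_left hg_lin (sub_nonneg.2 hγ1)]

/-- outer-loop one-step inequality: with `ν` 1-strongly convex
w.r.t. a norm `‖·‖`, `g` convex differentiable and `L`-smooth w.r.t. `‖·‖`, `F`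
convex, `Ψ = F + g`, `γ ∈ [0,1]`, `β ≥ 0`, `β − Lγ ≥ 0`,
`x̲ = (1−γ)x̄' + γx'`, `x̄ = (1−γ)x̄' + γx̃`, and
`Φ(u) = g(x̲) + ⟨∇g(x̲), u − x̲⟩ + F(u) + βV(x', u)`, one has
`Ψ(x̄) ≤ (1−γ)Ψ(x̄') + γΦ(x̃)`. -/
theorem outer_step_inequality {n : ℕ}
    -- `nrm` is a norm `‖·‖` on `ℝⁿ`
    (nrm : EuclideanSpace ℝ (Fin n) → ℝ)
    (hn_add : ∀ x y, nrm (x + y) ≤ nrm x + nrm y)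
    (hn_smul : ∀ (c : ℝ) x, nrm (c • x) = |c| * nrm x)
    (hn_def : ∀ x, nrm x = 0 → x = 0)
    -- `ν` is differentiable and 1-strongly convex w.r.t. `nrm`, `V = bregman ν`
    (ν : EuclideanSpace ℝ (Fin n) → ℝ) (hν_diff : Differentiable ℝ ν)
    (hν_strong : ∀ x y, (1 / 2) * (nrm (x - y)) ^ 2 ≤ bregman ν x y)
    -- `g` is convex, differentiable and `L`-smooth w.r.t. `nrm`
    (g : EuclideanSpace ℝ (Fin n) → ℝ) (hg_conv : ConvexOn ℝ Set.univ g)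
    (hg_diff : Differentiable ℝ g)
    (L : ℝ)
    (hg_smooth : ∀ x y, g x ≤ g y + ⟪gradient g y, x - y⟫ + L / 2 * (nrm (x - y)) ^ 2)
    -- `F` is convex
    (F : EuclideanSpace ℝ (Fin n) → ℝ) (hF_conv : ConvexOn ℝ Set.univ F)
    (xbar' x' xt : EuclideanSpace ℝ (Fin n))
    (γ : ℝ) (hγ : γ ∈ Set.Icc (0 : ℝ) 1)
    (β : ℝ) (hβ : 0 ≤ β) (hβL : β - L * γ ≥ 0) :
    (fun u => F u + g u) ((1 - γ) • xbar' + γ • xt) ≤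
      (1 - γ) * (fun u => F u + g u) xbar' +
        γ * (g ((1 - γ) • xbar' + γ • x') +
          ⟪gradient g ((1 - γ) • xbar' + γ • x'), xt - ((1 - γ) • xbar' + γ • x')⟫ +
          F xt + β * bregman ν x' xt) :=
  outer_step_inequality_general nrm hn_smul ν hν_strong g hg_conv hg_diff L hg_smooth F hF_conv
    xbar' x' xt γ hγ β hβ hβL
end
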